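/- For integers i, n with 2√n ≤ i and i + 1 ≤ n - 1, the quantity f(i) = (2i-1)(i+1)(i-2)(n!)² / (2n (n-i)! (n+i-1)!) satisfies f(i+1) ≤ f(i); that is, f is decreasing in i on the range i ≥ 2√n. -/

import Mathlib

/-!
Common definitions: rooted unlabeled trees on `n` vertices, the growth/pruning
coefficients `n(t,t')` and `m(t,t')`, the measure `π_n`, the up/down transition
probabilities, the down-up and up-down Markov chains, and separation distance.

A rooted tree is represented as `PreTree.node cs` where `cs` is the list of
subtrees of the root's children.  An *unlabeled* rooted tree is represented by
its canonical representative (children recursively sorted by an injective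
encoding into `ℕ`), and `trees n` is the finite set of canonical rooted trees
on `n` vertices.
-/

namespace RootedTreeChain

inductive PreTree : Type where
  | node : List PreTree → PreTree

namespace PreTree

/- Number of vertices. -/
mutual
  def size : PreTree → ℕ
    | .node cs => 1 + sizeList cs
  def sizeList : List PreTree → ℕ
    | [] => 0
    | t :: ts => size t + sizeList ts
end

mutual
def deq : (a b : PreTree) → Decidable (a = b)
  | .node cs, .node ds =>
    match deqList cs ds with
    | isTrue h => isTrue (by rw [h])
    | isFalse h => isFalse (by intro hh; cases hh; exact h rfl)
def deqList : (as bs : List PreTree) → Decidable (as = bs)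
  | [], [] => isTrue rfl
  | [], _ :: _ => isFalse (by simp)
  | _ :: _, [] => isFalse (by simp)
  | a :: as, b :: bs =>
    match deq a b, deqList as bs with
    | isTrue h1, isTrue h2 => isTrue (by rw [h1, h2])
    | isFalse h1, _ => isFalse (by intro hh; injection hh; contradiction)
    | _, isFalse h2 => isFalse (by intro hh; injection hh; contradiction)
end

instance : DecidableEq PreTree := deq

/- An injective encoding of trees into `ℕ`, used only to sort children
so that each unlabeled rooted tree has a unique canonical representative. -/
mutual
  def enc : PreTree → ℕ
    | .node cs => encList cs
  def encList : List PreTree → ℕ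
    | [] => 0
    | t :: ts => Nat.pair (enc t) (encList ts) + 1
end

/- Canonical representative of the isomorphism class of a rooted tree:
recursively sort the children by their encoding. -/
mutual
  def canon : PreTree → PreTree
    | .node cs => .node ((canonList cs).mergeSort (fun a b => enc a ≤ enc b))
  def canonList : List PreTree → List PreTree
    | [] => []
    | t :: ts => canon t :: canonList ts
end

/-- The one-vertex rooted tree `•`. -/
def leaf : PreTree := .node []

/- The addresses (paths of child indices from the root) of all vertices. -/
mutual
  def positions : PreTree → List (List ℕ)
    | .node cs => [] :: positionsList 0 cs
  def positionsList : ℕ → List PreTree → List (List ℕ)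
    | _, [] => []
    | i, t :: ts => (positions t).map (fun p => i :: p) ++ positionsList (i + 1) ts
end

/- The addresses of all terminal vertices (vertices with no outgoing edge). -/
mutual
  def termPositions : PreTree → List (List ℕ)
    | .node [] => [[]]
    | .node (c :: cs) => termPositionsList 0 (c :: cs)
  def termPositionsList : ℕ → List PreTree → List (List ℕ)
    | _, [] => []
    | i, t :: ts => (termPositions t).map (fun p => i :: p) ++ termPositionsList (i + 1) ts
end

/- Attach a new terminal vertex by an edge to the vertex at address `p`. -/
mutual
  def addLeafAt : PreTree → List ℕ → PreTree
    | .node cs, [] => .node (cs ++ [leaf])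
    | .node cs, i :: p => .node (addLeafAtList cs i p)
  def addLeafAtList : List PreTree → ℕ → List ℕ → List PreTree
    | [], _, _ => []
    | t :: ts, 0, p => addLeafAt t p :: ts
    | t :: ts, i + 1, p => t :: addLeafAtList ts i p
end

/- Remove the (terminal) vertex at address `p` together with the edge into it. -/
mutual
  def removeAt : PreTree → List ℕ → PreTree
    | .node cs, [] => .node cs
    | .node cs, [i] => .node (cs.eraseIdx i)
    | .node cs, i :: p => .node (removeAtList cs i p)
  def removeAtList : List PreTree → ℕ → List ℕ → List PreTree
    | [], _, _ => []
    | t :: ts, 0, p => removeAt t p :: ts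
    | t :: ts, i + 1, p => t :: removeAtList ts i p
end

/-- For `s ↗ t` (and more generally any `s, t` with `size t = size s + 1`),
`ncoef s t` is `n(s,t)`: the number of vertices of `s` to which a new edge can
be added to obtain `t`. -/
def ncoef (s t : PreTree) : ℕ :=
  ((positions s).filter (fun p => canon (addLeafAt s p) = t)).length

/-- For `s ↗ t`, `mcoef s t` is `m(s,t)`: the number of edges of `t` (into a
terminal vertex) which when removed give `s`. -/
def mcoef (s t : PreTree) : ℕ :=
  ((termPositions t).filter (fun p => canon (removeAt t p) = s)).length

/-- The list of all (canonical representatives of) rooted unlabeled trees on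
`n` vertices: every tree on `n+1 ≥ 2` vertices is obtained by attaching a new
terminal vertex to a tree on `n` vertices. -/
def treeList : ℕ → List PreTree
  | 0 => []
  | 1 => [leaf]
  | n + 2 =>
      ((treeList (n + 1)).flatMap
        (fun t => (positions t).map (fun p => canon (addLeafAt t p)))).dedup

/-- The set `𝒯_n` of rooted unlabeled trees on `n` vertices. -/
def trees (n : ℕ) : Finset PreTree := (treeList n).toFinset

/-- `T_n = |𝒯_n|`, the number of rooted unlabeled trees on `n` vertices. -/
def T (n : ℕ) : ℕ := (trees n).card

/-- Generalized growth coefficients: `nGen k t t'` is the coefficient `n(t,t')`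
of `t'` in `G^k(t)` (for `size t' = size t + k`). -/
def nGen : ℕ → PreTree → PreTree → ℕ
  | 0, t, t' => if t = t' then 1 else 0
  | k + 1, t, t' => ((treeList (t.size + k)).map (fun s => nGen k t s * ncoef s t')).sum

/-- Generalized pruning coefficients: `mGen k t t'` is the coefficient `m(t,t')`
of `t` in `P^k(t')` (for `size t' = size t + k`). -/
def mGen : ℕ → PreTree → PreTree → ℕ
  | 0, t, t' => if t = t' then 1 else 0
  | k + 1, t, t' => ((treeList (t'.size - 1)).map (fun s => mcoef s t' * mGen k t s)).sum

/-- `m(t) = m(•,t)`, the number of ways to take `t` apart by sequentially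
removing terminal edges. -/
def mWt (t : PreTree) : ℕ := mGen (t.size - 1) leaf t

/-- `n(t) = n(•,t)`, the number of ways to build `t` up from `•`. -/
def nWt (t : PreTree) : ℕ := nGen (t.size - 1) leaf t

/-- The measure `π_n(t) = m(t) n(t) / ∏_{i=2}^n C(i,2)` on `𝒯_n`. -/
def piM (n : ℕ) (t : PreTree) : ℚ :=
  (mWt t * nWt t : ℚ) / ∏ i ∈ Finset.Icc 2 n, (Nat.choose i 2 : ℚ)

/-- Upward transition probability `P_u(s,t) = m(s,t) n(t) / (C(n,2) n(s))`
from `s ∈ 𝒯_{n-1}` to `t ∈ 𝒯_n`. -/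
def Pu (n : ℕ) (s t : PreTree) : ℚ :=
  (mcoef s t : ℚ) * (nWt t : ℚ) / ((Nat.choose n 2 : ℚ) * (nWt s : ℚ))

/-- Downward transition probability `P_d(t,s) = m(s,t) m(s) / m(t)`
from `t ∈ 𝒯_n` to `s ∈ 𝒯_{n-1}`. -/
def Pd (t s : PreTree) : ℚ :=
  (mcoef s t : ℚ) * (mWt s : ℚ) / (mWt t : ℚ)

/-- The down-up Markov chain on `𝒯_n`:
`K(t,t') = Σ_{s : s ↗ t, s ↗ t'} P_d(t,s) P_u(s,t')`.  (The sum may be taken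
over all `s ∈ 𝒯_{n-1}` since the summand vanishes unless `s ↗ t` and `s ↗ t'`.) -/
def K (n : ℕ) (t t' : PreTree) : ℚ :=
  ∑ s ∈ trees (n - 1), Pd t s * Pu n s t'

/-- `r`-step transition probabilities `K^r(t,t')` of the down-up chain. -/
def Kpow (n : ℕ) : ℕ → PreTree → PreTree → ℚ
  | 0, t, t' => if t = t' then 1 else 0
  | r + 1, t, t' => ∑ s ∈ trees n, K n t s * Kpow n r s t'

/-- The up-down Markov chain on `𝒯_n`:
`DU_n(t,t') = Σ_{s : s ⋗ t, s ⋗ t'} P_u(t,s) P_d(s,t')`. -/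
def DU (n : ℕ) (t t' : PreTree) : ℚ :=
  ∑ s ∈ trees (n + 1), Pu (n + 1) t s * Pd s t'

/-- `r`-step transition probabilities of the up-down chain. -/
def DUpow (n : ℕ) : ℕ → PreTree → PreTree → ℚ
  | 0, t, t' => if t = t' then 1 else 0
  | r + 1, t, t' => ∑ s ∈ trees n, DU n t s * DUpow n r s t'

/-- Maximal separation distance `s^*(r) = max_{t,t' ∈ 𝒯_n} [1 - K^r(t,t')/π_n(t')]`
of the down-up chain on `𝒯_n`. -/
noncomputable def sStar (n r : ℕ) : ℝ :=
  sSup {x : ℝ | ∃ t ∈ trees n, ∃ t' ∈ trees n,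
    x = 1 - (Kpow n r t t' : ℝ) / (piM n t' : ℝ)}

/-- Maximal separation distance of the up-down chain on `𝒯_n`. -/
noncomputable def sStarDU (n r : ℕ) : ℝ :=
  sSup {x : ℝ | ∃ t ∈ trees n, ∃ t' ∈ trees n,
    x = 1 - (DUpow n r t t' : ℝ) / (piM n t' : ℝ)}

/-- The path on `n` vertices (rooted at an end): the unique rooted tree on
`n ≥ 2` vertices with exactly one terminal vertex. -/
def pathTree : ℕ → PreTree
  | 0 => leaf
  | 1 => leaf
  | n + 2 => .node [pathTree (n + 1)]

/-- The star on `n` vertices (rooted at the center): the unique rooted tree on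
`n` vertices with `n-1` terminal vertices. -/
def starTree (n : ℕ) : PreTree := .node (List.replicate (n - 1) leaf)


/- The order of the symmetry group `SG(t) = ∏_{v ∈ t} SG(t,v)`, where for a
vertex `v` with children `v_1, …, v_k`, `SG(t,v)` is generated by the
permutations exchanging isomorphic subtrees rooted at the `v_i`. -/
mutual
  def sgOrder : PreTree → ℕ
    | .node cs => sgOrderList cs *
        ((canonList cs).dedup.map (fun c => Nat.factorial ((canonList cs).count c))).prod
  def sgOrderList : List PreTree → ℕ
    | [] => 1
    | t :: ts => sgOrder t * sgOrderList ts
end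

/- `hProd t = ∏_{v ∈ t} h(v)`, the product over all vertices `v` of `t` of the
number `h(v)` of vertices of the subtree rooted at `v`. -/
mutual
  def hProd : PreTree → ℕ
    | .node cs => size (.node cs) * hProdList cs
  def hProdList : List PreTree → ℕ
    | [] => 1
    | t :: ts => hProd t * hProdList ts
end

/-- The matrix entry of `G P : ℂ𝒯_n → ℂ𝒯_n`: the coefficient of `t'` in `G(P(t))`. -/
def gpEntry (n : ℕ) (t t' : PreTree) : ℕ :=
  ∑ s ∈ trees (n - 1), mcoef s t * ncoef s t'

/-- The matrix entry of `(G P)^l : ℂ𝒯_n → ℂ𝒯_n`: the coefficient of `t'` in `(GP)^l(t)`. -/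
def gpPow (n : ℕ) : ℕ → PreTree → PreTree → ℕ
  | 0, t, t' => if t = t' then 1 else 0
  | l + 1, t, t' => ∑ u ∈ trees n, gpPow n l t u * gpEntry n u t'

end PreTree


/-!
With `g x = (2x - 1)(x + 1)(x - 2)`, cross-multiplying reduces `f (i + 1) ≤ f i` to
`g (i + 1) (n - i) ≤ g i (n + i)`. The difference of the two sides is
`2 (2i⁴ - 3i²) - 2 (3i² - 2) n`, and `4n ≤ i²` (i.e. `2√n ≤ i`) bounds the negative part.
-/

theorem four_mul_le_sq_of_two_mul_sqrt_le {n i : ℕ} (h : 2 * Real.sqrt n ≤ i) : 4 * n ≤ i ^ 2 := by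
  have h4 : ((4 * n : ℕ) : ℝ) ≤ (i ^ 2 : ℕ) :=
    calc ((4 * n : ℕ) : ℝ) = (2 * Real.sqrt n) ^ 2 := by
          rw [mul_pow, Real.sq_sqrt (Nat.cast_nonneg n)]; push_cast; ring
      _ ≤ (i : ℝ) ^ 2 := by gcongr
      _ = (i ^ 2 : ℕ) := by push_cast; rfl
  exact_mod_cast h4

section
open Nat
variable {K : Type*} [Field K] [LinearOrder K] [IsStrictOrderedRing K]

theorem div_factorial_succ_le_div_factorial_succ {p q c d : K} {a b : ℕ} (hc : 0 ≤ c)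
    (hd : 0 < d) (h : p * (a + 1) ≤ q * (b + 1)) :
    p * c / (d * a ! * (b + 1)!) ≤ q * c / (d * (a + 1)! * b !) := by
  simp only [Nat.factorial_succ, Nat.cast_mul, Nat.cast_succ]
  have hE : 0 ≤ c / (d * a ! * b !) := by positivity
  calc p * c / (d * a ! * ((b + 1) * b !)) = p / (b + 1) * (c / (d * a ! * b !)) := by
        field_simp
    _ ≤ q / (a + 1) * (c / (d * a ! * b !)) := by
        refine mul_le_mul_of_nonneg_right ?_ hE
        rwa [div_le_div_iff₀ (by positivity) (by positivity)]
    _ = q * c / (d * ((a + 1) * a !) * b !) := by field_simp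

theorem cubic_succ_mul_sub_le_cubic_mul_add {x N : K} (hN : 4 * N ≤ x ^ 2) (hx : 2 ≤ x ^ 2) :
    (2 * (x + 1) - 1) * ((x + 1) + 1) * ((x + 1) - 2) * (N - x)
      ≤ (2 * x - 1) * (x + 1) * (x - 2) * (N + x) := by
  nlinarith [mul_le_mul_of_nonneg_left hN (by linarith : (0 : K) ≤ 3 * x ^ 2 - 2),
    mul_nonneg (sq_nonneg x) (sub_nonneg.mpr hx)]

end

/-- For integers `i, n` with `2√n ≤ i` and `i+1 ≤ n-1`, the
quantity `f(i) = (2i-1)(i+1)(i-2)(n!)²/(2n (n-i)! (n+i-1)!)` satisfies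
`f(i+1) ≤ f(i)`: it is decreasing in `i` on the range `i ≥ 2√n`. -/
theorem ratio_factorial_decreasing (n i : ℕ) (hn : 4 ≤ n) (hi : 3 ≤ i)
    (hsq : 2 * Real.sqrt n ≤ i) (hin : i + 1 ≤ n - 1) :
    ((2 * ((i : ℚ) + 1) - 1) * (((i : ℚ) + 1) + 1) * (((i : ℚ) + 1) - 2)
        * (Nat.factorial n : ℚ) ^ 2)
      / (2 * (n : ℚ) * (Nat.factorial (n - (i + 1)) : ℚ) * (Nat.factorial (n + (i + 1) - 1) : ℚ))
    ≤ ((2 * (i : ℚ) - 1) * ((i : ℚ) + 1) * ((i : ℚ) - 2) * (Nat.factorial n : ℚ) ^ 2)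
      / (2 * (n : ℚ) * (Nat.factorial (n - i) : ℚ) * (Nat.factorial (n + i - 1) : ℚ)) := by
  have h4n : (4 * n : ℚ) ≤ (i : ℚ) ^ 2 := by exact_mod_cast four_mul_le_sq_of_two_mul_sqrt_le hsq
  have hi3 : (3 : ℚ) ≤ i := by exact_mod_cast hi
  have hsub : n - i = n - (i + 1) + 1 := by omega
  have hadd : n + (i + 1) - 1 = n + i - 1 + 1 := by omega
  have hsub_cast : ((n - (i + 1) : ℕ) : ℚ) + 1 = n - i := by
    rw [Nat.cast_sub (by omega)]; push_cast; ring
  have hadd_cast : ((n + i - 1 : ℕ) : ℚ) + 1 = n + i := by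
    rw [Nat.cast_sub (by omega)]; push_cast; ring
  rw [hsub, hadd]
  refine div_factorial_succ_le_div_factorial_succ (by positivity) (by positivity) ?_
  rw [hsub_cast, hadd_cast]
  exact cubic_succ_mul_sub_le_cubic_mul_add h4n (by nlinarith)

end RootedTreeChain
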